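/- The real function f(t) = ℓ(μ, B, t), viewing the log-likelihood as a function of the degrees of freedom with μ and B fixed, is differentiable at t = ν and its derivative equals (1/2)·ψ((ν+D)/2) − (1/2)·ψ(ν/2) − D/(2ν) − (1/2)·log(1 + q/ν) + (ν + D)·q/(2ν(ν + q)), where ψ(x) denotes the derivative at x of the function t ↦ log Γ(t) (the digamma function). -/

import Mathlib

open Matrix

/-- Multivariate t log-likelihood in the Cholesky precision parametrization `Ω = Bᵀ B`:
`ℓ(μ, B, ν) = log Γ((ν+D)/2) - log Γ(ν/2) - (D/2)·log ν - (D/2)·log π + log(det B)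
  - ((ν+D)/2)·log(1 + q/ν)` with `q = ‖B(y-μ)‖²`. -/
noncomputable def tCholLL (D : ℕ) (y μ : Fin D → ℝ)
    (B : Matrix (Fin D) (Fin D) ℝ) (ν : ℝ) : ℝ :=
  Real.log (Real.Gamma ((ν + D) / 2)) - Real.log (Real.Gamma (ν / 2))
    - ((D : ℝ) / 2) * Real.log ν - ((D : ℝ) / 2) * Real.log Real.pi
    + Real.log B.det
    - ((ν + D) / 2) * Real.log (1 + (∑ k, (B.mulVec (y - μ) k) ^ 2) / ν)

/-- The digamma function `ψ`, i.e. the derivative of `t ↦ log Γ(t)`. -/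
noncomputable def digamma (x : ℝ) : ℝ := deriv (fun t : ℝ => Real.log (Real.Gamma t)) x

open Real

theorem hasDerivAt_log_Gamma {x : ℝ} (hx : ∀ n : ℕ, x ≠ -n) :
    HasDerivAt (fun t => log (Gamma t)) (digamma x) x :=
  ((differentiableAt_Gamma hx).log (Gamma_ne_zero hx)).hasDerivAt

theorem hasDerivAt_log_Gamma_half_add {x : ℝ} (a : ℝ) (hx : 0 < (x + a) / 2) :
    HasDerivAt (fun t => log (Gamma ((t + a) / 2))) (digamma ((x + a) / 2) / 2) x := by
  have hpole : ∀ n : ℕ, (x + a) / 2 ≠ -n := fun n =>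
    ((neg_nonpos.mpr n.cast_nonneg).trans_lt hx).ne'
  exact ((hasDerivAt_log_Gamma hpole).comp x
    (((hasDerivAt_id' x).add_const a).div_const 2)).congr_deriv (mul_one_div _ _)

theorem hasDerivAt_log_one_add_div {q x : ℝ} (hx : x ≠ 0) (hxq : x + q ≠ 0) :
    HasDerivAt (fun t => log (1 + q / t)) (-q / (x * (x + q))) x := by
  have hquot : HasDerivAt (fun t => 1 + q / t) (-q / x ^ 2) x := by
    simpa [div_eq_mul_inv] using ((hasDerivAt_inv hx).const_mul q).const_add 1
  have hpos : 1 + q / x ≠ 0 := by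
    rw [one_add_div hx]
    exact div_ne_zero hxq hx
  convert hquot.log hpos using 1
  field_simp

theorem tChol_deriv_nu_general (D : ℕ) (y μ : Fin D → ℝ) (ν : ℝ) (hν : 0 < ν)
    (B : Matrix (Fin D) (Fin D) ℝ) :
    HasDerivAt (fun t : ℝ => tCholLL D y μ B t)
      ((1 / 2) * digamma ((ν + D) / 2) - (1 / 2) * digamma (ν / 2)
        - (D : ℝ) / (2 * ν)
        - (1 / 2) * Real.log (1 + (∑ k, (B.mulVec (y - μ) k) ^ 2) / ν)
        + (ν + D) * (∑ k, (B.mulVec (y - μ) k) ^ 2) /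
            (2 * ν * (ν + ∑ k, (B.mulVec (y - μ) k) ^ 2)))
      ν := by
  set q : ℝ := ∑ k, (B.mulVec (y - μ) k) ^ 2
  have hq : 0 ≤ q := Finset.sum_nonneg fun k _ => sq_nonneg _
  have hΓ₁ := hasDerivAt_log_Gamma_half_add (D : ℝ) (by positivity : 0 < (ν + D) / 2)
  have hΓ₂ := hasDerivAt_log_Gamma_half_add 0 (by positivity : 0 < (ν + 0) / 2)
  simp only [add_zero] at hΓ₂
  have hlog := (hasDerivAt_log hν.ne').const_mul ((D : ℝ) / 2)
  have hkernel := (((hasDerivAt_id' ν).add_const (D : ℝ)).div_const 2).mul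
    (hasDerivAt_log_one_add_div (q := q) hν.ne' (by positivity))
  refine (((((hΓ₁.sub hΓ₂).sub hlog).sub_const ((D : ℝ) / 2 * log π)).add_const
    (log B.det)).sub hkernel).congr_deriv ?_
  field_simp
  ring

/-- Partial derivative of the multivariate t log-likelihood with respect to the degrees
of freedom `ν`: it equals
`(1/2)·ψ((ν+D)/2) - (1/2)·ψ(ν/2) - D/(2ν) - (1/2)·log(1 + q/ν) + (ν + D)·q/(2ν(ν + q))`
with `q = ‖B(y-μ)‖²`. -/
theorem tChol_deriv_nu (D : ℕ) (hD : 1 ≤ D) (y μ : Fin D → ℝ) (ν : ℝ) (hν : 0 < ν)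
    (B : Matrix (Fin D) (Fin D) ℝ)
    (hLT : ∀ k l : Fin D, k < l → B k l = 0)
    (hdiag : ∀ k, 0 < B k k) :
    HasDerivAt (fun t : ℝ => tCholLL D y μ B t)
      ((1 / 2) * digamma ((ν + D) / 2) - (1 / 2) * digamma (ν / 2)
        - (D : ℝ) / (2 * ν)
        - (1 / 2) * Real.log (1 + (∑ k, (B.mulVec (y - μ) k) ^ 2) / ν)
        + (ν + D) * (∑ k, (B.mulVec (y - μ) k) ^ 2) /
            (2 * ν * (ν + ∑ k, (B.mulVec (y - μ) k) ^ 2)))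
      ν :=
  tChol_deriv_nu_general D y μ ν hν B
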